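/- Let R be a proper reflective full subcategory of the category of groups. Then every subfunctor F of the identity functor on groups whose values F(G) all lie in R is trivial, i.e., F(G) = 1 for all G. -/

import Mathlib

/-!
A reflective full subcategory is closed under the limits that exist in the ambient category, in
particular under equalizers. Every subgroup `S ≤ W` is the equalizer of the two permutation
representations of `W` on `W ⧸ S ⊔ {∞}` that differ by the transposition of `S` and `∞`.
Hence, as soon as every group embeds into a member of `R`, every group lies in `R`.

Each `F(K)` is normal in `K`. If `1 ≠ g ∈ F(G)`, then in `K = Sym(G × Z)` the translation
`u : (a, z) ↦ (g a, z)` lies in `F(K)`, and commutators with permutations supported on the rows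
`1` and `g` show that `F(K)` contains every commutator of `Sym(Z)` acting on row `g`. For
`Z = ℤ × M`, a permutation of `M` acting on level `0` alone is such a commutator (a swindle along
`ℤ`), so `Sym(M)`, and with it every group, embeds into some `F(K)`, which lies in `R`.
-/

open CategoryTheory

universe u

/-- A subfunctor of the identity functor on the category of groups. -/
structure GrpIdSubfunctor : Type (u + 1) where
  sub : ∀ G : GrpCat.{u}, Subgroup G
  map_le : ∀ {G H : GrpCat.{u}} (φ : G ⟶ H), (sub G).map φ.hom ≤ sub H

open Equiv Limits
open scoped commutatorElement

namespace CategoryTheory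

theorem Functor.essImage_of_isLimit_fork {C D : Type*} [Category C] [Category D] (i : D ⥤ C)
    [Reflective i] {W Q : C} {f h : W ⟶ Q} (hW : i.essImage W) (hQ : i.essImage Q)
    {c : Fork f h} (hc : IsLimit c) : i.essImage c.pt := by
  let η := (reflectorAdjunction i).unit.app c.pt
  obtain ⟨ψ, hηψ⟩ : ∃ ψ, η ≫ ψ = c.ι :=
    ⟨_, by rw [← unitCompPartialBijective_symm_apply c.pt hW, Equiv.symm_apply_apply]⟩
  have hψ : ψ ≫ f = ψ ≫ h := (unitCompPartialBijective c.pt hQ).symm.injective <| by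
    simp only [unitCompPartialBijective_symm_apply, ← Category.assoc]
    rw [hηψ, c.condition]
  obtain ⟨m, hm⟩ := Fork.IsLimit.lift' hc ψ hψ
  have : IsSplitMono η :=
    ⟨⟨m, Fork.IsLimit.hom_ext hc (by rw [Category.assoc, hm, hηψ, Category.id_comp])⟩⟩
  exact mem_essImage_of_unit_isSplitMono

end CategoryTheory

namespace GrpCat

variable {W Q : GrpCat.{u}} (f h : W ⟶ Q)

def eqLocusFork : Fork f h :=
  Fork.ofι (ofHom (f.hom.eqLocus h.hom).subtype) (by ext x; exact x.2)

def isLimitEqLocusFork : IsLimit (eqLocusFork f h) :=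
  Fork.IsLimit.mk _
    (fun s => ofHom (s.ι.hom.codRestrict _ fun x => ConcreteCategory.congr_hom s.condition x))
    (fun _ => rfl)
    (fun _ _ hm => by ext x; exact Subtype.ext (ConcreteCategory.congr_hom hm x))

theorem eqLocus_mem_of_reflective (P : GrpCat.{u} → Prop) [Reflective (ObjectProperty.ι P)]
    (hiso : ∀ {G H : GrpCat.{u}}, (G ≅ H) → P G → P H) (hW : P W) (hQ : P Q) :
    P (of (f.hom.eqLocus h.hom)) := by
  obtain ⟨⟨E, hE⟩, ⟨e⟩⟩ := (ObjectProperty.ι P).essImage_of_isLimit_fork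
    ((ObjectProperty.ι P).obj_mem_essImage ⟨W, hW⟩) ((ObjectProperty.ι P).obj_mem_essImage ⟨Q, hQ⟩)
    (isLimitEqLocusFork f h)
  exact hiso e hE

end GrpCat

theorem Subgroup.exists_eqLocus_perm {B : Type u} [Group B] (S : Subgroup B) :
    ∃ (X : Type u) (φ ψ : B →* Perm X), φ.eqLocus ψ = S := by
  let f : GrpCat.of S ⟶ GrpCat.of B := GrpCat.ofHom S.subtype
  have h := GrpCat.SurjectiveOfEpiAuxs.agree f
  rw [GrpCat.hom_ofHom, S.range_subtype] at h
  exact ⟨_, _, _, SetLike.coe_injective h.symm⟩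

theorem forall_of_forall_exists_injective_hom (P : GrpCat.{u} → Prop)
    [Reflective (ObjectProperty.ι P)] (hiso : ∀ {G H : GrpCat.{u}}, (G ≅ H) → P G → P H)
    (hemb : ∀ H : GrpCat.{u}, ∃ W : GrpCat.{u}, P W ∧ ∃ j : H →* W, Function.Injective j)
    (H : GrpCat.{u}) : P H := by
  obtain ⟨W, hW, j, hj⟩ := hemb H
  obtain ⟨X, φ, ψ, hφψ⟩ := j.range.exists_eqLocus_perm
  obtain ⟨Q, hQ, e, he⟩ := hemb (GrpCat.of (Perm X))
  have hrange : (e.comp φ).eqLocus (e.comp ψ) = j.range := by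
    rw [← hφψ]; ext; exact he.eq_iff
  have hP := GrpCat.eqLocus_mem_of_reflective (GrpCat.ofHom (e.comp φ)) (GrpCat.ofHom (e.comp ψ))
    P hiso hW hQ
  exact hiso ((MonoidHom.ofInjective hj).trans (MulEquiv.subgroupCongr hrange.symm)).toGrpIso.symm hP

namespace Equiv.Perm

variable {α β : Type*} [DecidableEq α]

def prodExtendRightHom (a : α) : Perm β →* Perm (α × β) where
  toFun := prodExtendRight a
  map_one' := by ext ⟨b, x⟩ <;> by_cases hb : b = a <;> simp [prodExtendRight, hb]
  map_mul' p q := by ext ⟨b, x⟩ <;> by_cases hb : b = a <;> simp [prodExtendRight, hb]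

theorem prodExtendRightHom_injective (a : α) :
    Function.Injective (prodExtendRightHom (β := β) a) := fun p q hpq =>
  Equiv.ext fun x => by simpa [prodExtendRightHom] using congr($hpq (a, x))

theorem commute_prodExtendRightHom {a b : α} (hab : a ≠ b) (p q : Perm β) :
    Commute (prodExtendRightHom a p) (prodExtendRightHom b q) := by
  refine Equiv.ext fun ⟨c, x⟩ => ?_
  by_cases hca : c = a
  · subst hca; simp [prodExtendRightHom, prodExtendRight, hab]
  · by_cases hcb : c = b
    · subst hcb; simp [prodExtendRightHom, prodExtendRight, hca]
    · simp [prodExtendRightHom, prodExtendRight, hca, hcb]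

def leftMulHom (G β : Type*) [Group G] : G →* Perm (G × β) where
  toFun a := prodCongr (Equiv.mulLeft a) (Equiv.refl β)
  map_one' := by ext <;> simp
  map_mul' a b := by ext <;> simp [mul_assoc]

theorem leftMulHom_conj_prodExtendRightHom {G : Type*} [Group G] [DecidableEq G] (a b : G)
    (p : Perm β) :
    leftMulHom G β a * prodExtendRightHom b p * (leftMulHom G β a)⁻¹ =
      prodExtendRightHom (a * b) p := by
  refine Equiv.ext fun ⟨c, x⟩ => ?_
  by_cases hc : c = a * b
  · subst hc; simp [prodExtendRightHom, prodExtendRight, leftMulHom]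
  · have : a⁻¹ * c ≠ b := fun h => hc (by rw [← h, mul_inv_cancel_left])
    simp [prodExtendRightHom, prodExtendRight, leftMulHom, hc, this]

def nonnegLevels (p : Perm β) : Perm (ℤ × β) :=
  prodCongrRight fun i => if 0 ≤ i then p else Equiv.refl β

def levelShift : Perm (ℤ × β) :=
  prodCongr (Equiv.addRight 1) (Equiv.refl β)

theorem prodExtendRightHom_zero_eq_commutator (p : Perm β) :
    prodExtendRightHom 0 p = ⁅nonnegLevels p, levelShift⁆ := by
  refine Equiv.ext fun ⟨i, x⟩ => ?_
  rcases lt_trichotomy i 0 with hi | rfl | hi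
  · have : ¬ 1 ≤ i := by omega
    simp [commutatorElement_def, prodExtendRightHom, prodExtendRight, nonnegLevels, levelShift,
      hi.ne, hi.not_ge, this]
  · simp [commutatorElement_def, prodExtendRightHom, prodExtendRight, nonnegLevels, levelShift]
  · have : 1 ≤ i := by omega
    simp [commutatorElement_def, prodExtendRightHom, prodExtendRight, nonnegLevels, levelShift,
      hi.ne', hi.le, this]

end Equiv.Perm

namespace GrpIdSubfunctor

variable (F : GrpIdSubfunctor.{u})

theorem map_mem {G H : GrpCat.{u}} (φ : G ⟶ H) {x : G} (hx : x ∈ F.sub G) : φ x ∈ F.sub H :=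
  F.map_le φ (Subgroup.mem_map_of_mem _ hx)

instance normal (G : GrpCat.{u}) : (F.sub G).Normal where
  conj_mem _ hx g := F.map_mem (GrpCat.ofHom (MulAut.conj g).toMonoidHom) hx

theorem prodExtendRightHom_commutator_mem {G : GrpCat.{u}} [DecidableEq G] {g : G}
    (hg : g ∈ F.sub G) (hg1 : g ≠ 1) {β : Type u} (p q : Perm β) :
    Perm.prodExtendRightHom g ⁅p, q⁆ ∈ F.sub (GrpCat.of (Perm (G × β))) := by
  set N := F.sub (GrpCat.of (Perm (G × β)))
  have : N.Normal := F.normal _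
  set ρ : G → Perm β →* Perm (G × β) := Perm.prodExtendRightHom
  set A := ρ 1 p⁻¹
  set u := Perm.leftMulHom G β g
  have hu : u ∈ N := F.map_mem (GrpCat.ofHom (Perm.leftMulHom G β)) hg
  have hAu : ⁅A, u⁆ = A * ρ g p := by
    have hA : A⁻¹ = ρ 1 p := by rw [← map_inv, inv_inv]
    rw [commutatorElement_def, hA, mul_assoc A, mul_assoc A,
      Perm.leftMulHom_conj_prodExtendRightHom, mul_one]
  have hC : ⁅A * ρ g p, ρ g q⁆ ∈ N := by
    rw [← hAu]
    exact Subgroup.commutator_le_left N ⊤ <| Subgroup.commutator_mem_commutator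
      (Subgroup.commutator_le_right ⊤ N (Subgroup.commutator_mem_commutator trivial hu)) trivial
  rw [commutatorElement_mul_left_eq_conj_mul,
    commutatorElement_eq_one_iff_commute.mpr (Perm.commute_prodExtendRightHom hg1.symm _ _),
    mul_one] at hC
  simpa [mul_assoc, ← map_commutatorElement] using this.conj_mem' _ hC A

theorem exists_injective_hom {G : GrpCat.{u}} {g : G} (hg : g ∈ F.sub G) (hg1 : g ≠ 1)
    (H : Type u) [Group H] : ∃ (K : GrpCat.{u}) (j : H →* F.sub K), Function.Injective j := by
  classical
  let e : H →* Perm (G × (ℤ × H)) := (Perm.prodExtendRightHom g).comp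
    ((Perm.prodExtendRightHom (0 : ℤ)).comp (MulAction.toPermHom H H))
  have he : Function.Injective e := (Perm.prodExtendRightHom_injective g).comp
    ((Perm.prodExtendRightHom_injective 0).comp MulAction.toPerm_injective)
  have hmem (x : H) : e x ∈ F.sub (GrpCat.of (Perm (G × (ℤ × H)))) := by
    simp only [e, MonoidHom.comp_apply, Perm.prodExtendRightHom_zero_eq_commutator]
    exact F.prodExtendRightHom_commutator_mem hg hg1 _ _
  refine ⟨GrpCat.of (Perm (G × (ℤ × H))), e.codRestrict _ hmem, ?_⟩
  exact (e.injective_codRestrict _ hmem).mpr he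

end GrpIdSubfunctor

theorem stmt_17 (P : GrpCat.{u} → Prop)
    [Reflective (ObjectProperty.ι P)]
    (hiso : ∀ {G H : GrpCat.{u}}, (G ≅ H) → P G → P H)
    (hproper : ∃ G : GrpCat.{u}, ¬ P G)
    (F : GrpIdSubfunctor.{u})
    (hval : ∀ G : GrpCat.{u}, P (GrpCat.of (F.sub G))) :
    ∀ G : GrpCat.{u}, F.sub G = ⊥ := by
  intro G
  by_contra hne
  obtain ⟨g, hg, hg1⟩ := (F.sub G).bot_or_exists_ne_one.resolve_left hne
  obtain ⟨B, hB⟩ := hproper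
  refine hB (forall_of_forall_exists_injective_hom P hiso (fun H => ?_) B)
  obtain ⟨K, j, hj⟩ := F.exists_injective_hom hg hg1 H
  exact ⟨_, hval K, j, hj⟩
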